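/- arXiv:2209.00094 — 4 statements merged into one kernel-verified Lean document; each statement's English description precedes it below -/
import Mathlib

section
/- Let Λ ∈ ℝ^{|W|×|P|} have entries in {0,1} with each column containing exactly one entry equal to 1 and each row containing at least one entry equal to 1, and let Δ ∈ ℝ^{|E|×|P|} have entries in {0,1}. Then there exists a constant l_d > 0, depending only on |E| and |W| (one may take l_d = √(|E|·|W|)), such that for all demand vectors Q, Q′ ∈ ℝ^{|W|} with Q ≥ 0 and Q′ ≥ 0, and every q ∈ ℝ^{|E|} for which there exists μ ≥ 0 with Λμ = Q and Δμ = q, there exists q′ ∈ ℝ^{|E|} for which there exists μ′ ≥ 0 with Λμ′ = Q′ and Δμ′ = q′, satisfying ‖q′ − q‖₂ ≤ l_d ‖Q′ − Q‖₂. -/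
open Matrix Finset

/-- If `Λ` is 0/1 with exactly one `1` per column and at least one `1`
per row, and `Δ` is 0/1, then there is a constant `l_d > 0` depending only on `|E|` and
`|W|` (one may take `l_d = √(|E|·|W|)`) such that for all nonnegative demands `Q, Q'`
and every feasible edge flow `q` for `Q` there is a feasible edge flow `q'` for `Q'`
with `‖q' − q‖₂ ≤ l_d ‖Q' − Q‖₂`. -/
theorem stmt_2 {W P E : Type*} [Fintype W] [Fintype P] [Fintype E] [Nonempty W] [Nonempty E]
    (Λ : Matrix W P ℝ) (Δ : Matrix E P ℝ)
    (hΛ01 : ∀ w p, Λ w p = 0 ∨ Λ w p = 1)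
    (hΛcol : ∀ p, ∑ w, Λ w p = 1)
    (hΛrow : ∀ w, ∃ p, Λ w p = 1)
    (hΔ01 : ∀ e p, Δ e p = 0 ∨ Δ e p = 1) :
    ∃ l_d : ℝ, 0 < l_d ∧ l_d = Real.sqrt (Fintype.card E * Fintype.card W) ∧
      ∀ (Q Q' : W → ℝ), (∀ w, 0 ≤ Q w) → (∀ w, 0 ≤ Q' w) →
        ∀ q : E → ℝ,
          (∃ μ : P → ℝ, (∀ p, 0 ≤ μ p) ∧ Λ.mulVec μ = Q ∧ Δ.mulVec μ = q) →
          ∃ q' : E → ℝ,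
            (∃ μ' : P → ℝ, (∀ p, 0 ≤ μ' p) ∧ Λ.mulVec μ' = Q' ∧ Δ.mulVec μ' = q') ∧
            Real.sqrt (∑ e, (q' e - q e) ^ 2) ≤
              l_d * Real.sqrt (∑ w, (Q' w - Q w) ^ 2) := by
  classical
  -- each column has a (unique) 1
  have hex : ∀ p, ∃ w, Λ w p = 1 := by
    intro p
    by_contra h
    push_neg at h
    have h0 : ∀ w, Λ w p = 0 := fun w => (hΛ01 w p).resolve_right (h w)
    have := hΛcol p
    simp [h0] at this
  set σ : P → W := fun p => (hex p).choose with hσdef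
  have hσ : ∀ p, Λ (σ p) p = 1 := fun p => (hex p).choose_spec
  have huniq : ∀ p w, Λ w p = 1 → w = σ p := by
    intro p w h
    by_contra hne
    have hsub : ({w, σ p} : Finset W) ⊆ Finset.univ := Finset.subset_univ _
    have hle : ∑ v ∈ ({w, σ p} : Finset W), Λ v p ≤ ∑ v, Λ v p :=
      Finset.sum_le_sum_of_subset_of_nonneg hsub
        (fun i _ _ => (hΛ01 i p).elim (fun h => h.ge) (fun h => by rw [h]; norm_num))
    rw [Finset.sum_pair hne, h, hσ p, hΛcol p] at hle
    norm_num at hle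
  have hΛite : ∀ w p, Λ w p = if σ p = w then 1 else 0 := by
    intro w p
    by_cases h : σ p = w
    · subst h; simp [hσ p]
    · rcases hΛ01 w p with h0 | h1
      · simp [h, h0]
      · exact absurd (huniq p w h1).symm h
  -- mulVec in terms of fibers of σ
  have hsum : ∀ (ν : P → ℝ) (w : W),
      Λ.mulVec ν w = ∑ p ∈ Finset.univ.filter (fun p => σ p = w), ν p := by
    intro ν w
    rw [Finset.sum_filter]
    simp only [Matrix.mulVec, dotProduct, hΛite, ite_mul, one_mul, zero_mul]
  -- representative path for each OD pair
  have hp0 : ∀ w : W, ∃ p, σ p = w := fun w => by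
    obtain ⟨p, hp⟩ := hΛrow w
    exact ⟨p, (huniq p w hp).symm⟩
  set p0 : W → P := fun w => (hp0 w).choose with hp0def
  have hp0σ : ∀ w, σ (p0 w) = w := fun w => (hp0 w).choose_spec
  refine ⟨Real.sqrt (Fintype.card E * Fintype.card W), ?_, rfl, ?_⟩
  · apply Real.sqrt_pos.mpr
    have h1 : 0 < Fintype.card E := Fintype.card_pos
    have h2 : 0 < Fintype.card W := Fintype.card_pos
    positivity
  intro Q Q' hQ hQ' q hq
  obtain ⟨μ, hμ0, hΛμ, hΔμ⟩ := hq
  have hQw : ∀ w, ∑ p ∈ Finset.univ.filter (fun p => σ p = w), μ p = Q w := by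
    intro w; rw [← hsum μ w, hΛμ]
  have hμzero : ∀ p, Q (σ p) = 0 → μ p = 0 := by
    intro p hp
    have hz : ∑ x ∈ Finset.univ.filter (fun x => σ x = σ p), μ x = 0 := by
      rw [hQw (σ p), hp]
    have := (Finset.sum_eq_zero_iff_of_nonneg (fun x _ => hμ0 x)).mp hz
    exact this p (by simp)
  set μ' : P → ℝ := fun p =>
    if Q (σ p) = 0 then (if p = p0 (σ p) then Q' (σ p) else 0)
    else μ p * (Q' (σ p) / Q (σ p)) with hμ'def
  have hμ'0 : ∀ p, 0 ≤ μ' p := by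
    intro p
    simp only [hμ'def]
    split_ifs with h1 h2
    · exact hQ' _
    · exact le_refl 0
    · exact mul_nonneg (hμ0 p) (div_nonneg (hQ' _) (hQ _))
  have hΛμ' : Λ.mulVec μ' = Q' := by
    funext w
    rw [hsum μ' w]
    by_cases h : Q w = 0
    · have hcongr : ∀ p ∈ Finset.univ.filter (fun p => σ p = w),
          μ' p = if p = p0 w then Q' w else 0 := by
        intro p hp
        simp only [Finset.mem_filter] at hp
        simp only [hμ'def, hp.2, h, if_true]
      rw [Finset.sum_congr rfl hcongr]
      rw [Finset.sum_eq_single_of_mem (p0 w) (by simp [hp0σ w])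
        (fun b _ hb => if_neg hb)]
      simp
    · have hcongr : ∀ p ∈ Finset.univ.filter (fun p => σ p = w),
          μ' p = μ p * (Q' w / Q w) := by
        intro p hp
        simp only [Finset.mem_filter] at hp
        simp only [hμ'def, hp.2, h, if_false]
      rw [Finset.sum_congr rfl hcongr, ← Finset.sum_mul, hQw w,
        mul_div_cancel₀ _ h]
  refine ⟨Δ.mulVec μ', ⟨μ', hμ'0, hΛμ', rfl⟩, ?_⟩
  -- per-w bound
  have hkey : ∀ w, ∑ p ∈ Finset.univ.filter (fun p => σ p = w), |μ' p - μ p|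
      = |Q' w - Q w| := by
    intro w
    by_cases h : Q w = 0
    · have hcongr : ∀ p ∈ Finset.univ.filter (fun p => σ p = w),
          |μ' p - μ p| = if p = p0 w then Q' w else 0 := by
        intro p hp
        simp only [Finset.mem_filter] at hp
        have hμp : μ p = 0 := hμzero p (by rw [hp.2]; exact h)
        simp only [hμ'def, hp.2, h, if_true, hμp, sub_zero]
        split_ifs with h2
        · exact abs_of_nonneg (hQ' w)
        · exact abs_zero
      rw [Finset.sum_congr rfl hcongr,
        Finset.sum_eq_single_of_mem (p0 w) (by simp [hp0σ w]) (fun b _ hb => if_neg hb),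
        if_pos rfl, h, sub_zero, abs_of_nonneg (hQ' w)]
    · have hQpos : 0 < Q w := lt_of_le_of_ne (hQ w) (Ne.symm h)
      have hcongr : ∀ p ∈ Finset.univ.filter (fun p => σ p = w),
          |μ' p - μ p| = μ p * (|Q' w - Q w| / Q w) := by
        intro p hp
        simp only [Finset.mem_filter] at hp
        simp only [hμ'def, hp.2, h, if_false]
        have : μ p * (Q' w / Q w) - μ p = μ p * ((Q' w - Q w) / Q w) := by
          field_simp
        rw [this, abs_mul, abs_of_nonneg (hμ0 p), abs_div, abs_of_pos hQpos]
      rw [Finset.sum_congr rfl hcongr, ← Finset.sum_mul, hQw w]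
      field_simp
  -- per-edge bound
  set S := ∑ w, |Q' w - Q w| with hSdef
  have hedge : ∀ e, |Δ.mulVec μ' e - q e| ≤ S := by
    intro e
    have h1 : Δ.mulVec μ' e - q e = ∑ p, Δ e p * (μ' p - μ p) := by
      rw [← hΔμ]
      simp only [Matrix.mulVec, dotProduct, ← Finset.sum_sub_distrib, mul_sub]
    rw [h1]
    calc |∑ p, Δ e p * (μ' p - μ p)| ≤ ∑ p, |Δ e p * (μ' p - μ p)| :=
          Finset.abs_sum_le_sum_abs _ _
      _ ≤ ∑ p, |μ' p - μ p| := by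
          apply Finset.sum_le_sum
          intro p _
          rw [abs_mul]
          rcases hΔ01 e p with h | h <;> simp [h]
      _ = ∑ w, ∑ p ∈ Finset.univ.filter (fun p => σ p = w), |μ' p - μ p| :=
          (Finset.sum_fiberwise _ _ _).symm
      _ = S := by rw [hSdef]; exact Finset.sum_congr rfl (fun w _ => hkey w)
  have hS0 : 0 ≤ S := Finset.sum_nonneg (fun w _ => abs_nonneg _)
  -- combine
  have hsq : ∑ e, (Δ.mulVec μ' e - q e) ^ 2 ≤
      (Fintype.card E : ℝ) * ((Fintype.card W : ℝ) * ∑ w, (Q' w - Q w) ^ 2) := by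
    have hS2 : S ^ 2 ≤ (Fintype.card W : ℝ) * ∑ w, (Q' w - Q w) ^ 2 := by
      have := Finset.sum_mul_sq_le_sq_mul_sq Finset.univ (fun _ : W => (1 : ℝ))
        (fun w => |Q' w - Q w|)
      simpa [hSdef, Finset.card_univ, sq_abs] using this
    calc ∑ e, (Δ.mulVec μ' e - q e) ^ 2 ≤ ∑ _e : E, S ^ 2 := by
          apply Finset.sum_le_sum
          intro e _
          rw [← sq_abs]
          exact pow_le_pow_left₀ (abs_nonneg _) (hedge e) 2
      _ = (Fintype.card E : ℝ) * S ^ 2 := by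
          rw [Finset.sum_const, Finset.card_univ, nsmul_eq_mul]
      _ ≤ (Fintype.card E : ℝ) * ((Fintype.card W : ℝ) * ∑ w, (Q' w - Q w) ^ 2) := by
          apply mul_le_mul_of_nonneg_left hS2 (by positivity)
  calc Real.sqrt (∑ e, (Δ.mulVec μ' e - q e) ^ 2)
      ≤ Real.sqrt ((Fintype.card E : ℝ) * ((Fintype.card W : ℝ) * ∑ w, (Q' w - Q w) ^ 2)) :=
        Real.sqrt_le_sqrt hsq
    _ = Real.sqrt ((Fintype.card E : ℝ) * (Fintype.card W : ℝ)) *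
        Real.sqrt (∑ w, (Q' w - Q w) ^ 2) := by
        rw [← mul_assoc, Real.sqrt_mul (by positivity)]
    _ = Real.sqrt (Fintype.card E * Fintype.card W) * Real.sqrt (∑ w, (Q' w - Q w) ^ 2) := by
        norm_num
end

section
/- Let M ∈ ℝ^{n×n} be symmetric positive definite, C ∈ ℝ^{r×n}, and let λ, s ∈ ℝ^r satisfy: λ_i ≥ 0 and s_i ≤ 0 and λ_i s_i = 0 for every i; strict complementarity, i.e. there is no index i with λ_i = 0 and s_i = 0; and the rows {C_i : s_i = 0} of C indexed by the active constraints are linearly independent. Then the (n+r)×(n+r) block matrix [[M, Cᵀ], [diag(λ)·C, diag(s)]] is nonsingular. -/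
/-!
Let `(x, y)` be a kernel vector. Strict complementarity splits the indices: on active ones
(`s i = 0`) the second block row gives `(C x) i = 0`, on inactive ones it gives `y i = 0`.
Hence `C x ⬝ᵥ y = 0`, and pairing the first block row `M x + Cᵀ y = 0` with `x` gives
`xᵀ M x = 0`, so `x = 0`. Then `Cᵀ y = 0` is a combination of the independent active rows
of `C`, so `y = 0`.
-/

open Matrix

namespace Matrix

variable {m n : Type*} [Fintype m]

theorem eq_zero_of_vecMul_eq_zero_of_linearIndependent {R : Type*} [Ring R] {C : Matrix m n R}
    {p : m → Prop} (hC : LinearIndependent R fun i : {i // p i} => C i) {y : m → R}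
    (hy : ∀ i, ¬ p i → y i = 0) (h : y ᵥ* C = 0) : y = 0 := by
  classical
  have hsum : ∑ i : {i // p i}, y i • C i = 0 := by
    rw [← h, vecMul_eq_sum, ← Fintype.sum_subtype_add_sum_subtype p, left_eq_add]
    exact Finset.sum_eq_zero fun i _ => by rw [hy i i.2, zero_smul]
  funext i
  by_cases hi : p i
  · exact Fintype.linearIndependent_iff.1 hC (fun i => y i) hsum ⟨i, hi⟩
  · exact hy i hi

theorem PosDef.eq_zero_of_mulVec_add_transpose_mulVec_eq_zero [Fintype n] {M : Matrix n n ℝ}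
    (hM : M.PosDef) {C : Matrix m n ℝ} {x : n → ℝ} {y : m → ℝ}
    (h : M *ᵥ x + Cᵀ *ᵥ y = 0)
    (horth : C *ᵥ x ⬝ᵥ y = 0) : x = 0 := by
  by_contra hx
  have hquad : x ⬝ᵥ M *ᵥ x = 0 := by
    rw [eq_neg_of_add_eq_zero_left h, dotProduct_neg, dotProduct_mulVec, vecMul_transpose, horth,
      neg_zero]
  simpa [hquad] using hM.dotProduct_mulVec_pos hx

end Matrix

theorem eq_zero_of_complementary {R : Type*} [Ring R] [NoZeroDivisors R] {l s u w : R}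
    (hcomp : l * s = 0) (hstrict : ¬ (l = 0 ∧ s = 0)) (h : l * u + s * w = 0) :
    (s = 0 → u = 0) ∧ (s ≠ 0 → w = 0) := by
  refine ⟨fun hs => ?_, fun hs => ?_⟩
  · rw [hs, zero_mul, add_zero] at h
    exact (mul_eq_zero.1 h).resolve_left fun hl => hstrict ⟨hl, hs⟩
  · rw [(mul_eq_zero.1 hcomp).resolve_right hs, zero_mul, zero_add] at h
    exact (mul_eq_zero.1 h).resolve_left hs

theorem stmt_5_general {n r : ℕ}
    (M : Matrix (Fin n) (Fin n) ℝ) (C : Matrix (Fin r) (Fin n) ℝ)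
    (lam s : Fin r → ℝ)
    (hM : M.PosDef)
    (hcomp : ∀ i, lam i * s i = 0)
    (hstrict : ¬ ∃ i, lam i = 0 ∧ s i = 0)
    (hrows : LinearIndependent ℝ (fun i : {i : Fin r // s i = 0} => C i.1)) :
    IsUnit (Matrix.fromBlocks M Cᵀ (Matrix.diagonal lam * C) (Matrix.diagonal s)) := by
  rw [← mulVec_injective_iff_isUnit, ← coe_mulVecLin, injective_iff_map_eq_zero]
  intro v hv
  obtain ⟨x, y, rfl⟩ : ∃ x y, v = Sum.elim x y := ⟨_, _, (Sum.elim_comp_inl_inr v).symm⟩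
  rw [coe_mulVecLin, fromBlocks_mulVec, Sum.elim_comp_inl, Sum.elim_comp_inr,
    ← Sum.elim_zero_zero, Sum.elim_eq_iff] at hv
  obtain ⟨hfirst, hsecond⟩ := hv
  have hcases i := eq_zero_of_complementary (hcomp i) (fun h => hstrict ⟨i, h⟩)
    (by simpa [← mulVec_mulVec, mulVec_diagonal] using congrFun hsecond i)
  have horth : C *ᵥ x ⬝ᵥ y = 0 := Finset.sum_eq_zero fun i _ => by
    by_cases hi : s i = 0
    · rw [(hcases i).1 hi, zero_mul]
    · rw [(hcases i).2 hi, mul_zero]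
  have hx : x = 0 := hM.eq_zero_of_mulVec_add_transpose_mulVec_eq_zero hfirst horth
  have hy : y = 0 := eq_zero_of_vecMul_eq_zero_of_linearIndependent hrows (fun i => (hcases i).2)
    (by simpa [hx, mulVec_transpose] using hfirst)
  rw [hx, hy, Sum.elim_zero_zero]

/-- If `M` is symmetric positive definite, the multipliers `λ` and
slacks `s` satisfy nonnegativity/nonpositivity, complementary slackness and strict
complementarity, and the active rows of `C` are linearly independent, then the KKT
block matrix `[[M, Cᵀ], [diag(λ)·C, diag(s)]]` is nonsingular. -/
theorem stmt_5 {n r : ℕ}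
    (M : Matrix (Fin n) (Fin n) ℝ) (C : Matrix (Fin r) (Fin n) ℝ)
    (lam s : Fin r → ℝ)
    (hM : M.PosDef) (hMsymm : M.IsSymm)
    (hlam : ∀ i, 0 ≤ lam i)
    (hs : ∀ i, s i ≤ 0)
    (hcomp : ∀ i, lam i * s i = 0)
    (hstrict : ¬ ∃ i, lam i = 0 ∧ s i = 0)
    (hrows : LinearIndependent ℝ (fun i : {i : Fin r // s i = 0} => C i.1)) :
    IsUnit (Matrix.fromBlocks M Cᵀ (Matrix.diagonal lam * C) (Matrix.diagonal s)) :=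
  stmt_5_general M C lam s hM hcomp hstrict hrows
end

section
/- Let f : ℝ^n → ℝ be differentiable with L₁-Lipschitz gradient, let r > 0, and let f_r(x) := the average of f(x+u) over u uniformly distributed on the closed Euclidean ball B(0,r). Then f_r is differentiable and for every x ∈ ℝ^n, ‖∇f_r(x) − ∇f(x)‖ ≤ L₁ r. -/
/-!
A Lipschitz gradient gives the uniform second-order Taylor bound
`‖f (y + h) - f y - ⟪∇f y, h⟫‖ ≤ L ‖h‖²`. Averaging it over `u ∈ B(0, r)` at `y = x + u` shows
that the average of the translated gradients `∇f (x + u)` is the gradient of `f_r` at `x`. Each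
of these translates lies in the closed ball of radius `L r` around `∇f x`, hence so does their
average, by convexity.
-/

open MeasureTheory Metric

section Average

variable {α E : Type*} [MeasurableSpace α] {μ : Measure α} {s : Set α}
  [NormedAddCommGroup E] [NormedSpace ℝ E]

theorem norm_setAverage_le_of_norm_le {g : α → E} {C : ℝ} (hs : μ s ≠ ⊤) (hC₀ : 0 ≤ C)
    (hC : ∀ a ∈ s, ‖g a‖ ≤ C) : ‖⨍ a in s, g a ∂μ‖ ≤ C := by
  rw [setAverage_eq, norm_smul, norm_inv, Real.norm_of_nonneg measureReal_nonneg]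
  rcases eq_or_ne (μ.real s) 0 with h0 | h0
  · simpa [h0] using hC₀
  calc (μ.real s)⁻¹ * ‖∫ a in s, g a ∂μ‖ ≤ (μ.real s)⁻¹ * (C * μ.real s) := by
        gcongr; exact norm_setIntegral_le_of_norm_le_const hs.lt_top hC
    _ = C := by field_simp

theorem average_sub {f g : α → E} (hf : Integrable f μ) (hg : Integrable g μ) :
    ⨍ a, f a - g a ∂μ = ⨍ a, f a ∂μ - ⨍ a, g a ∂μ := by
  simp only [average_eq, integral_sub hf hg, smul_sub]

theorem ContinuousLinearMap.average_apply {H : Type*} [NormedAddCommGroup H] [NormedSpace ℝ H]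
    {φ : α → H →L[ℝ] E} (hφ : Integrable φ μ) (v : H) :
    (⨍ a, φ a ∂μ) v = ⨍ a, φ a v ∂μ := by
  simp only [average_eq, smul_apply, ContinuousLinearMap.integral_apply hφ]

end Average

section Translate

variable {E F : Type*} [NormedAddCommGroup E] [MeasurableSpace E] [BorelSpace E]
  {μ : Measure E} [IsFiniteMeasureOnCompacts μ] {s : Set E}
  [NormedAddCommGroup F] [NormedSpace ℝ F] [CompleteSpace F] {L : NNReal}

theorem norm_setAverage_comp_add_sub_le {g : E → F} (hg : LipschitzWith L g) (hs : IsCompact s)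
    (h0 : μ s ≠ 0) {r : ℝ} (hsr : s ⊆ closedBall 0 r) (x : E) :
    ‖⨍ u in s, g (x + u) ∂μ - g x‖ ≤ L * r := by
  rw [← dist_eq_norm, ← mem_closedBall]
  refine (convex_closedBall _ _).set_average_mem isClosed_closedBall h0 hs.measure_ne_top
    (ae_restrict_of_forall_mem hs.measurableSet fun u hu => ?_)
    ((hg.continuous.comp (continuous_const_add x)).continuousOn.integrableOn_compact hs)
  rw [mem_closedBall]
  exact (hg.dist_le_mul _ _).trans (by gcongr; simpa using hsr hu)

end Translate

section Smoothing

variable {E F : Type*} [NormedAddCommGroup E] [NormedSpace ℝ E]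
  [NormedAddCommGroup F] [NormedSpace ℝ F]
  {f : E → F} {f' : E → E →L[ℝ] F} {L : NNReal}

theorem norm_sub_sub_fderiv_le_of_lipschitzWith (hf : ∀ x, HasFDerivAt f (f' x) x)
    (hf' : LipschitzWith L f') (a b : E) :
    ‖f b - f a - f' a (b - a)‖ ≤ L * ‖b - a‖ ^ 2 := by
  have hb : b ∈ closedBall a ‖b - a‖ := by rw [mem_closedBall, dist_eq_norm]
  have hderiv_close : ∀ z ∈ closedBall a ‖b - a‖, ‖f' z - f' a‖ ≤ L * ‖b - a‖ := fun z hz => by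
    rw [← dist_eq_norm]
    exact (hf'.dist_le_mul z a).trans (by gcongr; exact hz)
  have := (convex_closedBall a ‖b - a‖).norm_image_sub_le_of_norm_hasFDerivWithin_le'
    (fun z _ => (hf z).hasFDerivWithinAt) hderiv_close (mem_closedBall_self (norm_nonneg _)) hb
  rwa [mul_assoc, ← sq] at this

variable [MeasurableSpace E] [BorelSpace E] {μ : Measure E} [IsFiniteMeasureOnCompacts μ]
  {s : Set E}

theorem hasFDerivAt_setAverage_comp_add (hf : ∀ x, HasFDerivAt f (f' x) x)
    (hf' : LipschitzWith L f') (hs : IsCompact s) (x : E) :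
    HasFDerivAt (fun y => ⨍ u in s, f (y + u) ∂μ) (⨍ u in s, f' (x + u) ∂μ) x := by
  have hfc : Continuous f := continuous_iff_continuousAt.2 fun x => (hf x).continuousAt
  have hint_f : ∀ y, IntegrableOn (fun u => f (y + u)) s μ := fun y =>
    (hfc.comp (continuous_const_add y)).continuousOn.integrableOn_compact hs
  have hint_f' : IntegrableOn (fun u => f' (x + u)) s μ :=
    (hf'.continuous.comp (continuous_const_add x)).continuousOn.integrableOn_compact hs
  have hremainder (h : E) : ⨍ u in s, (f (x + h + u) - f (x + u) - f' (x + u) h) ∂μ =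
      (⨍ u in s, f (x + h + u) ∂μ) - (⨍ u in s, f (x + u) ∂μ) - (⨍ u in s, f' (x + u) ∂μ) h := by
    rw [average_sub (f := fun u => f (x + h + u) - f (x + u)) ((hint_f _).sub (hint_f x))
        (hint_f'.apply_continuousLinearMap h), average_sub (hint_f _) (hint_f x),
      ContinuousLinearMap.average_apply hint_f']
  rw [hasFDerivAt_iff_isLittleO_nhds_zero]
  refine Asymptotics.IsBigO.trans_isLittleO ?_ (Asymptotics.isLittleO_norm_pow_id one_lt_two)
  refine Asymptotics.IsBigO.of_bound L (Filter.Eventually.of_forall fun h => ?_)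
  rw [← hremainder, Real.norm_of_nonneg (by positivity : (0 : ℝ) ≤ ‖h‖ ^ 2)]
  refine norm_setAverage_le_of_norm_le hs.measure_ne_top (by positivity) fun u _ => ?_
  simpa [add_right_comm x h u] using
    norm_sub_sub_fderiv_le_of_lipschitzWith hf hf' (x + u) (x + h + u)

end Smoothing

/-- If `f` is differentiable with `L₁`-Lipschitz gradient, then the
ball-smoothed function `f_r(x) = ⨍_{B(0,r)} f(x+u) du` is differentiable and its
gradient satisfies `‖∇f_r(x) − ∇f(x)‖ ≤ L₁ r` for every `x`. -/
theorem stmt_12 {n : ℕ} (f : EuclideanSpace ℝ (Fin n) → ℝ)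
    (G : EuclideanSpace ℝ (Fin n) → EuclideanSpace ℝ (Fin n))
    (hG : ∀ x, HasGradientAt f (G x) x)
    (L₁ : NNReal) (hL : LipschitzWith L₁ G)
    (r : ℝ) (hr : 0 < r) :
    ∃ Gr : EuclideanSpace ℝ (Fin n) → EuclideanSpace ℝ (Fin n),
      (∀ x, HasGradientAt
        (fun y => ⨍ u in Metric.closedBall (0 : EuclideanSpace ℝ (Fin n)) r, f (y + u))
        (Gr x) x) ∧
      ∀ x, ‖Gr x - G x‖ ≤ (L₁ : ℝ) * r := by
  let T := InnerProductSpace.toDual ℝ (EuclideanSpace ℝ (Fin n))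
  have hf : ∀ x, HasFDerivAt f (T (G x)) x := fun x => (hG x).hasFDerivAt
  have hT : LipschitzWith L₁ (T ∘ G) := by simpa using T.lipschitz.comp hL
  have hB : IsCompact (closedBall (0 : EuclideanSpace ℝ (Fin n)) r) := isCompact_closedBall 0 r
  refine ⟨fun x => T.symm (⨍ u in closedBall 0 r, T (G (x + u))), fun x => ?_, fun x => ?_⟩
  · rw [hasGradientAt_iff_hasFDerivAt, T.apply_symm_apply]
    exact hasFDerivAt_setAverage_comp_add hf hT hB x
  · rw [← T.symm_apply_apply (G x), ← map_sub, T.symm.norm_map]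
    exact norm_setAverage_comp_add_sub_le hT hB (measure_closedBall_pos volume 0 hr).ne'
      subset_rfl x
end

section
/- Let Λ ∈ ℝ^{|W|×|P|} have entries in {0,1} with each column containing exactly one entry equal to 1, let Δ ∈ ℝ^{|E|×|P|} have entries in {0,1}, let Q ∈ ℝ^{|W|} with Q ≥ 0, and let each ℓ_e : [0,∞) → ℝ be continuous and nondecreasing. Define the feasible set F_Q := {μ ∈ ℝ^{|P|} : μ ≥ 0, Λμ = Q}, the Beckmann potential J(μ) := Σ_{e∈E} ∫₀^{(Δμ)_e} ℓ_e(z) dz, and the path latency ℓ_p(μ) := Σ_{e∈E} Δ_{ep} ℓ_e((Δμ)_e). Then μ̄ ∈ F_Q minimizes J over F_Q if and only if μ̄ is a Wardrop equilibrium, i.e. for every w ∈ W and all paths p, p′ with Λ_{wp} = Λ_{wp′} = 1 and μ̄_p > 0, one has ℓ_p(μ̄) ≤ ℓ_{p′}(μ̄). -/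
open Matrix Finset

lemma aux_intble (ℓ : ℝ → ℝ) (hm : MonotoneOn ℓ (Set.Ici 0))
    {a b : ℝ} (ha : 0 ≤ a) (hb : 0 ≤ b) :
    IntervalIntegrable ℓ MeasureTheory.volume a b := by
  apply (hm.mono ?_).intervalIntegrable
  intro z hz
  rw [Set.uIcc_eq_union] at hz
  rcases hz with h | h
  · exact le_trans ha h.1
  · exact le_trans hb h.1

lemma aux_ge (ℓ : ℝ → ℝ) (hm : MonotoneOn ℓ (Set.Ici 0))
    {a b : ℝ} (ha : 0 ≤ a) (hb : 0 ≤ b) :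
    ℓ a * (b - a) ≤ ∫ z in a..b, ℓ z := by
  rcases le_total a b with hab | hab
  · have h1 : (∫ z in a..b, ℓ a) ≤ ∫ z in a..b, ℓ z := by
      apply intervalIntegral.integral_mono_on hab intervalIntegrable_const
        (aux_intble ℓ hm ha hb)
      intro z hz
      exact hm ha (le_trans ha hz.1) hz.1
    simpa [mul_comm] using h1
  · have h1 : (∫ z in b..a, ℓ z) ≤ ∫ z in b..a, ℓ a := by
      apply intervalIntegral.integral_mono_on hab (aux_intble ℓ hm hb ha)
        intervalIntegrable_const
      intro z hz
      exact hm (le_trans hb hz.1) ha hz.2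
    rw [intervalIntegral.integral_symm]
    simp only [intervalIntegral.integral_const, smul_eq_mul] at h1
    nlinarith [h1]

lemma aux_le (ℓ : ℝ → ℝ) (hm : MonotoneOn ℓ (Set.Ici 0))
    {a b : ℝ} (ha : 0 ≤ a) (hb : 0 ≤ b) :
    (∫ z in a..b, ℓ z) ≤ ℓ b * (b - a) := by
  rcases le_total a b with hab | hab
  · have h1 : (∫ z in a..b, ℓ z) ≤ ∫ z in a..b, ℓ b := by
      apply intervalIntegral.integral_mono_on hab (aux_intble ℓ hm ha hb)
        intervalIntegrable_const
      intro z hz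
      exact hm (le_trans ha hz.1) hb hz.2
    simpa [mul_comm] using h1
  · have h1 : (∫ z in b..a, ℓ b) ≤ ∫ z in b..a, ℓ z := by
      apply intervalIntegral.integral_mono_on hab intervalIntegrable_const
        (aux_intble ℓ hm hb ha)
      intro z hz
      exact hm hb (le_trans hb hz.1) hz.1
    rw [intervalIntegral.integral_symm]
    simp only [intervalIntegral.integral_const, smul_eq_mul] at h1
    nlinarith [h1]

/-- (Beckmann characterization of Wardrop equilibria.) For 0/1
incidence matrices (each path joining exactly one OD pair), a nonnegative demand `Q`
and continuous nondecreasing latencies, a feasible path flow minimizes the Beckmann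
potential `J(μ) = Σ_e ∫₀^{(Δμ)_e} ℓ_e` iff it is a Wardrop equilibrium: every used
path of an OD pair has latency no greater than any other path of that pair. -/
theorem stmt_14 {W P E : Type*} [Fintype W] [Fintype P] [Fintype E]
    (Λ : Matrix W P ℝ) (Δ : Matrix E P ℝ)
    (hΛ01 : ∀ w p, Λ w p = 0 ∨ Λ w p = 1)
    (hΛcol : ∀ p, ∑ w, Λ w p = 1)
    (hΔ01 : ∀ e p, Δ e p = 0 ∨ Δ e p = 1)
    (Q : W → ℝ) (hQ : ∀ w, 0 ≤ Q w)
    (ℓ : E → ℝ → ℝ)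
    (hℓ_cont : ∀ e, ContinuousOn (ℓ e) (Set.Ici 0))
    (hℓ_mono : ∀ e, MonotoneOn (ℓ e) (Set.Ici 0))
    (μbar : P → ℝ) (hμbar : μbar ∈ {μ : P → ℝ | (∀ p, 0 ≤ μ p) ∧ Λ.mulVec μ = Q}) :
    IsMinOn (fun μ : P → ℝ => ∑ e, ∫ z in (0:ℝ)..(Δ.mulVec μ e), ℓ e z)
        {μ : P → ℝ | (∀ p, 0 ≤ μ p) ∧ Λ.mulVec μ = Q} μbar ↔
      (∀ w p p', Λ w p = 1 → Λ w p' = 1 → 0 < μbar p →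
        ∑ e, Δ e p * ℓ e (Δ.mulVec μbar e) ≤ ∑ e, Δ e p' * ℓ e (Δ.mulVec μbar e)) := by
  classical
  obtain ⟨hμbar_nn, hμbar_eq⟩ := hμbar
  have hΔnn : ∀ e p, 0 ≤ Δ e p := by
    intro e p; rcases hΔ01 e p with h | h <;> rw [h] <;> norm_num
  have hΛnn : ∀ w p, 0 ≤ Λ w p := by
    intro w p; rcases hΛ01 w p with h | h <;> rw [h] <;> norm_num
  set a : E → ℝ := Δ.mulVec μbar with ha_def
  set c : P → ℝ := fun p => ∑ e, Δ e p * ℓ e (a e) with hc_def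
  have hmv_nn : ∀ (μ : P → ℝ), (∀ p, 0 ≤ μ p) → ∀ e, 0 ≤ Δ.mulVec μ e := by
    intro μ hμ e
    exact Finset.sum_nonneg fun p _ => mul_nonneg (hΔnn e p) (hμ p)
  have ha_nn : ∀ e, 0 ≤ a e := hmv_nn μbar hμbar_nn
  -- key identity
  have hkey : ∀ ν : P → ℝ, ∑ e, ℓ e (a e) * Δ.mulVec ν e = ∑ p, ν p * c p := by
    intro ν
    simp only [mulVec, dotProduct, hc_def, Finset.mul_sum, Finset.sum_mul]
    rw [Finset.sum_comm]
    exact Finset.sum_congr rfl fun p _ => Finset.sum_congr rfl fun e _ => by ring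
  constructor
  · -- min ⇒ Wardrop
    intro hmin w p p' hp hp' hpos
    by_contra hcon
    push_neg at hcon
    have hne : p ≠ p' := by rintro rfl; exact lt_irrefl _ hcon
    set d : P → ℝ := fun q => (if q = p' then (1:ℝ) else 0) - (if q = p then 1 else 0)
      with hd_def
    have hΛmvd : ∀ i, Λ.mulVec d i = Λ i p' - Λ i p := by
      intro i
      simp only [mulVec, dotProduct, hd_def, mul_sub, mul_ite, mul_one, mul_zero,
        Finset.sum_sub_distrib, Finset.sum_ite_eq', Finset.mem_univ, if_true]
    have hΔmvd : ∀ i, Δ.mulVec d i = Δ i p' - Δ i p := by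
      intro i
      simp only [mulVec, dotProduct, hd_def, mul_sub, mul_ite, mul_one, mul_zero,
        Finset.sum_sub_distrib, Finset.sum_ite_eq', Finset.mem_univ, if_true]
    -- Λ.mulVec d = 0
    have hΛd : Λ.mulVec d = 0 := by
      funext w'
      have hcol : ∀ (pp : P), Λ w pp = 1 → w' ≠ w → Λ w' pp = 0 := by
        intro pp hpp hww
        rcases hΛ01 w' pp with h | h
        · exact h
        · exfalso
          have h2 : (2:ℝ) ≤ ∑ v, Λ v pp := by
            have := Finset.sum_le_sum_of_subset_of_nonneg
              (Finset.subset_univ {w, w'}) (fun v _ _ => hΛnn v pp)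
            rw [Finset.sum_pair (Ne.symm hww), hpp, h] at this
            linarith
          rw [hΛcol pp] at h2; linarith
      have heq : Λ w' p' = Λ w' p := by
        by_cases hww : w' = w
        · subst hww; rw [hp, hp']
        · rw [hcol p hp hww, hcol p' hp' hww]
      rw [hΛmvd w', heq, Pi.zero_apply, sub_self]
    set de : E → ℝ := fun e => Δ e p' - Δ e p with hde_def
    -- flow perturbation μt
    set μt : ℝ → P → ℝ := fun t => μbar + t • d with hμt_def
    have hμt_mv : ∀ t e, Δ.mulVec (μt t) e = a e + t * de e := by
      intro t e
      rw [hμt_def]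
      simp only [Matrix.mulVec_add, Matrix.mulVec_smul, Pi.add_apply, Pi.smul_apply,
        smul_eq_mul, ha_def, hΔmvd e, hde_def]
    have hsingle : ∀ e, Δ e p * μbar p ≤ a e := by
      intro e
      exact Finset.single_le_sum (f := fun q => Δ e q * μbar q)
        (fun q _ => mul_nonneg (hΔnn e q) (hμbar_nn q)) (Finset.mem_univ p)
    have hnn : ∀ t : ℝ, 0 ≤ t → t ≤ μbar p → ∀ e, 0 ≤ a e + t * de e := by
      intro t ht htle e
      have h1 := hsingle e
      have h2 : t * Δ e p ≤ μbar p * Δ e p := mul_le_mul_of_nonneg_right htle (hΔnn e p)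
      have h3 : 0 ≤ t * Δ e p' := mul_nonneg ht (hΔnn e p')
      simp only [hde_def]
      nlinarith
    have hfeas : ∀ t : ℝ, 0 ≤ t → t ≤ μbar p →
        μt t ∈ {μ : P → ℝ | (∀ q, 0 ≤ μ q) ∧ Λ.mulVec μ = Q} := by
      intro t ht htle
      constructor
      · intro q
        simp only [hμt_def, Pi.add_apply, Pi.smul_apply, smul_eq_mul, hd_def]
        by_cases hq : q = p
        · subst hq
          rw [if_neg hne, if_pos rfl]
          nlinarith
        · rw [if_neg hq]
          have : (0:ℝ) ≤ if q = p' then (1:ℝ) else 0 := by positivity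
          nlinarith [hμbar_nn q]
      · rw [hμt_def, Matrix.mulVec_add, Matrix.mulVec_smul, hΛd, hμbar_eq]
        simp
    -- g t := directional derivative-like quantity
    set g : ℝ → ℝ := fun t => ∑ e, ℓ e (a e + t * de e) * de e with hg_def
    have hg_nonneg : ∀ t : ℝ, 0 < t → t ≤ μbar p → 0 ≤ g t := by
      intro t ht htle
      have hfe := hfeas t ht.le htle
      have hmin' := isMinOn_iff.mp hmin (μt t) hfe
      -- J(μt t) - J(μbar) ≤ t * g t
      have hub : (∑ e, ∫ z in (0:ℝ)..(Δ.mulVec (μt t) e), ℓ e z)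
          - (∑ e, ∫ z in (0:ℝ)..(a e), ℓ e z) ≤ t * g t := by
        rw [← Finset.sum_sub_distrib, hg_def, Finset.mul_sum]
        refine Finset.sum_le_sum fun e _ => ?_
        rw [hμt_mv t e]
        have hint1 := aux_intble (ℓ e) (hℓ_mono e) le_rfl (ha_nn e)
        have hint2 := aux_intble (ℓ e) (hℓ_mono e) (ha_nn e) (hnn t ht.le htle e)
        have hadj := intervalIntegral.integral_add_adjacent_intervals hint1 hint2
        have hle := aux_le (ℓ e) (hℓ_mono e) (ha_nn e) (hnn t ht.le htle e)
        have : a e + t * de e - a e = t * de e := by ring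
        rw [this] at hle
        nlinarith [hadj, hle]
      have h0 : 0 ≤ t * g t := by linarith [hub, hmin']
      exact nonneg_of_mul_nonneg_right h0 ht
    -- continuity: g t → g 0 = c p' - c p < 0 along t → 0⁺, contradiction
    have hg0 : g 0 = (∑ e, Δ e p' * ℓ e (a e)) - ∑ e, Δ e p * ℓ e (a e) := by
      rw [hg_def, ← Finset.sum_sub_distrib]
      refine Finset.sum_congr rfl fun e _ => ?_
      rw [hde_def]; ring_nf
    have hNB : (nhdsWithin (0:ℝ) (Set.Ioc 0 (μbar p))).NeBot := by
      rw [← mem_closure_iff_nhdsWithin_neBot, closure_Ioc hpos.ne]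
      exact ⟨le_rfl, hpos.le⟩
    have htend : Filter.Tendsto g (nhdsWithin (0:ℝ) (Set.Ioc 0 (μbar p))) (nhds (g 0)) := by
      rw [hg_def]
      apply tendsto_finset_sum
      intro e _
      simp only [zero_mul, add_zero]
      apply Filter.Tendsto.mul_const
      have hinner : Filter.Tendsto (fun t : ℝ => a e + t * de e)
          (nhdsWithin (0:ℝ) (Set.Ioc 0 (μbar p))) (nhdsWithin (a e) (Set.Ici 0)) := by
        rw [tendsto_nhdsWithin_iff]
        constructor
        · have : Filter.Tendsto (fun t : ℝ => a e + t * de e) (nhds 0)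
              (nhds (a e + 0 * de e)) :=
            (continuous_const.add (continuous_id.mul continuous_const)).tendsto 0
          simpa using this.mono_left nhdsWithin_le_nhds
        · filter_upwards [eventually_mem_nhdsWithin] with t ht
          exact hnn t ht.1.le ht.2 e
      exact Filter.Tendsto.comp (hℓ_cont e (a e) (ha_nn e)) hinner
    have hge : (0:ℝ) ≤ g 0 := by
      refine ge_of_tendsto htend ?_
      filter_upwards [eventually_mem_nhdsWithin] with t ht
      exact hg_nonneg t ht.1 ht.2
    rw [hg0] at hge
    linarith
  · -- Wardrop ⇒ min
    intro hW
    rw [isMinOn_iff]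
    intro μ hμ
    obtain ⟨hμ_nn, hμ_eq⟩ := hμ
    set b : E → ℝ := Δ.mulVec μ with hb_def
    have hb_nn : ∀ e, 0 ≤ b e := hmv_nn μ hμ_nn
    have hstep1 : ∑ p, (μ p - μbar p) * c p
        ≤ (∑ e, ∫ z in (0:ℝ)..(b e), ℓ e z) - (∑ e, ∫ z in (0:ℝ)..(a e), ℓ e z) := by
      rw [← Finset.sum_sub_distrib]
      calc ∑ p, (μ p - μbar p) * c p
          = ∑ e, ℓ e (a e) * Δ.mulVec (μ - μbar) e := by
            rw [hkey (μ - μbar)]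
            exact Finset.sum_congr rfl fun p _ => by simp
        _ = ∑ e, ℓ e (a e) * (b e - a e) := by
            refine Finset.sum_congr rfl fun e _ => ?_
            rw [Matrix.mulVec_sub]; simp [hb_def, ha_def]
        _ ≤ ∑ e, ((∫ z in (0:ℝ)..(b e), ℓ e z) - ∫ z in (0:ℝ)..(a e), ℓ e z) := by
            refine Finset.sum_le_sum fun e _ => ?_
            have hadj := intervalIntegral.integral_add_adjacent_intervals
              (aux_intble (ℓ e) (hℓ_mono e) le_rfl (ha_nn e))
              (aux_intble (ℓ e) (hℓ_mono e) (ha_nn e) (hb_nn e))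
            have := aux_ge (ℓ e) (hℓ_mono e) (ha_nn e) (hb_nn e)
            linarith
    -- VI : Σ (μ p - μbar p) c p ≥ 0
    have hVI : 0 ≤ ∑ p, (μ p - μbar p) * c p := by
      have hrow : ∀ q : P, (μ q - μbar q) * c q = ∑ w, Λ w q * ((μ q - μbar q) * c q) := by
        intro q
        rw [← Finset.sum_mul, hΛcol q, one_mul]
      calc (0:ℝ) ≤ ∑ w, ∑ q, Λ w q * ((μ q - μbar q) * c q) := by
            refine Finset.sum_nonneg fun w _ => ?_
            by_cases hQw : Q w = 0
            · -- both flows of OD pair w vanish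
              have hz : ∀ (ν : P → ℝ), (∀ q, 0 ≤ ν q) → Λ.mulVec ν = Q →
                  ∀ q, Λ w q * ν q = 0 := by
                intro ν hν hνeq q
                have hsum : ∑ q, Λ w q * ν q = 0 := by
                  have := congrFun hνeq w
                  simpa [mulVec, dotProduct, hQw] using this
                exact (Finset.sum_eq_zero_iff_of_nonneg
                  (fun q _ => mul_nonneg (hΛnn w q) (hν q))).mp hsum q (Finset.mem_univ q)
              refine le_of_eq (Finset.sum_eq_zero fun q _ => ?_).symm
              have h1 := hz μ hμ_nn hμ_eq q
              have h2 := hz μbar hμbar_nn hμbar_eq q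
              rcases hΛ01 w q with h | h
              · rw [h, zero_mul]
              · rw [h, one_mul] at h1 h2
                rw [h, one_mul, h1, h2]; ring
            · -- some used path p0 exists
              have hQpos : 0 < Q w := lt_of_le_of_ne (hQ w) (Ne.symm hQw)
              have hsum : ∑ q, Λ w q * μbar q = Q w := by
                have := congrFun hμbar_eq w
                simpa [mulVec, dotProduct] using this
              obtain ⟨p0, -, hp0⟩ : ∃ q ∈ Finset.univ, 0 < Λ w q * μbar q := by
                by_contra hcc
                push_neg at hcc
                have : ∑ q, Λ w q * μbar q ≤ 0 :=
                  Finset.sum_nonpos fun q hq => hcc q hq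
                linarith
              have hΛp0 : Λ w p0 = 1 := by
                rcases hΛ01 w p0 with h | h
                · rw [h] at hp0; simp at hp0
                · exact h
              have hμp0 : 0 < μbar p0 := by
                rw [hΛp0, one_mul] at hp0; exact hp0
              set lam := c p0 with hlam
              have hmin_lam : ∀ q, Λ w q = 1 → lam ≤ c q := fun q hq =>
                hW w p0 q hΛp0 hq hμp0
              have hused : ∀ q, Λ w q = 1 → 0 < μbar q → c q = lam := fun q hq hq' =>
                le_antisymm (hW w q p0 hq hΛp0 hq') (hmin_lam q hq)
              have hsum2 : ∑ q, Λ w q * μ q = Q w := by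
                have := congrFun hμ_eq w
                simpa [mulVec, dotProduct] using this
              calc (0:ℝ) = ∑ q, Λ w q * ((μ q - μbar q) * lam) := by
                    have hzero : ∑ q, Λ w q * (μ q - μbar q) = 0 := by
                      simp only [mul_sub, Finset.sum_sub_distrib, hsum, hsum2, sub_self]
                    have hrw : ∑ q, Λ w q * ((μ q - μbar q) * lam)
                        = (∑ q, Λ w q * (μ q - μbar q)) * lam := by
                      rw [Finset.sum_mul]
                      exact Finset.sum_congr rfl fun q _ => by ring
                    rw [hrw, hzero, zero_mul]
                _ ≤ ∑ q, Λ w q * ((μ q - μbar q) * c q) := by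
                    refine Finset.sum_le_sum fun q _ => ?_
                    rcases hΛ01 w q with h | h
                    · rw [h]; simp
                    · rw [h, one_mul, one_mul]
                      rcases eq_or_lt_of_le (hμbar_nn q) with hq0 | hq0
                      · have hcq := hmin_lam q h
                        rw [← hq0]
                        nlinarith [hμ_nn q]
                      · rw [hused q h hq0]
        _ = ∑ q, ∑ w, Λ w q * ((μ q - μbar q) * c q) := Finset.sum_comm
        _ = ∑ p, (μ p - μbar p) * c p := Finset.sum_congr rfl fun q _ => (hrow q).symm
    linarith [hstep1, hVI]
end
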